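/- Let v: ℂ[G(3,n)] → ℂ be an algebra homomorphism with v(Δ^{i,i+1,i+2}) = 1 for all i (indices mod n). Writing Δ_k(i) := v(Δ at {i, i+1, i+k+2}) and Δ^k(i) := v(Δ at {i, i+k+1, i+k+2}), for 3 ≤ k < n−3 the recursion Δ_k(i) = Δ_1(i)·Δ_{k−1}(i+1) − Δ^1(i+1)·Δ_{k−2}(i+2) + Δ_{k−3}(i+3) holds. -/

import Mathlib

open Finset

/-- `(a,b,c)` is cyclically ordered in `Fin n`. -/
def Cyc {n : ℕ} (a b c : Fin n) : Prop :=
  (a < b ∧ b < c) ∨ (b < c ∧ c < a) ∨ (c < a ∧ a < b)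

/-- `a <_x b` iff `(x,a,b)` is cyclically ordered. -/
def Ltx {n : ℕ} (x a b : Fin n) : Prop := Cyc x a b

/-- `a ≤_x b`. -/
def Leqx {n : ℕ} (x a b : Fin n) : Prop := Ltx x a b ∨ a = b

/-- Two subsets `A`, `B` of `Fin n` are crossing. -/
def Crossing {n : ℕ} (A B : Finset (Fin n)) : Prop :=
  ∃ a ∈ A \ B, ∃ c ∈ A \ B, ∃ b ∈ B \ A, ∃ d ∈ B \ A, Cyc a b c ∧ Cyc b c d

/-- `F` is a maximal weakly separated family of triangles in `Fin n`. -/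
def MaxWS {n : ℕ} (F : Finset (Finset (Fin n))) : Prop :=
  (∀ t ∈ F, t.card = 3) ∧
  (∀ s ∈ F, ∀ t ∈ F, ¬ Crossing s t) ∧
  (∀ t : Finset (Fin n), t.card = 3 →
    (∀ s ∈ F, ¬ Crossing t s ∧ ¬ Crossing s t) → t ∈ F)

/-- The subfamily of triangles of `F` containing `x`. -/
def Fx {n : ℕ} (F : Finset (Finset (Fin n))) (x : Fin n) : Finset (Finset (Fin n)) :=
  F.filter (fun t => x ∈ t)

/-- Degree of `a` in the graph `G(F_x)`: the number of triangles of `F`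
containing both `x` and `a`. -/
def degx {n : ℕ} (F : Finset (Finset (Fin n))) (x a : Fin n) : ℕ :=
  ((Fx F x).filter (fun t => a ∈ t)).card

/-- `a` is a vertex of the graph `G(F_x)`. -/
def IsVertex {n : ℕ} (F : Finset (Finset (Fin n))) (x a : Fin n) : Prop :=
  a ≠ x ∧ 1 ≤ degx F x a

/-- `a` is a triangulation point of `G(F_x)`: a vertex of degree at least 2. -/
def IsTriPoint {n : ℕ} (F : Finset (Finset (Fin n))) (x a : Fin n) : Prop :=
  a ≠ x ∧ 2 ≤ degx F x a

/-- `a` is a leaf of `G(F_x)` attached to `b`. -/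
def IsLeafAt {n : ℕ} (F : Finset (Finset (Fin n))) (x a b : Fin n) : Prop :=
  a ≠ x ∧ degx F x a = 1 ∧ ({x, b, a} : Finset (Fin n)) ∈ F

/-- A graph with vertex set `V ⊆ Fin n` (in the induced cyclic order) and edge
set `E` is a triangulation of a polygon: equivalently (as noted in the paper),
`E` is a maximal family of pairwise non-crossing 2-subsets of `V`. -/
def IsPolygonTriangulation {n : ℕ} (V : Set (Fin n)) (E : Set (Finset (Fin n))) : Prop :=
  (∀ e ∈ E, e.card = 2 ∧ ↑e ⊆ V) ∧
  (∀ e ∈ E, ∀ f ∈ E, ¬ Crossing e f) ∧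
  (∀ e : Finset (Fin n), e.card = 2 → ↑e ⊆ V →
    (∀ f ∈ E, ¬ Crossing e f ∧ ¬ Crossing f e) → e ∈ E)

/-- The Plücker ideal: alternating relations together with the Plücker relations. -/
noncomputable def plueckerIdeal (n : ℕ) : Ideal (MvPolynomial (Fin 3 → Fin n) ℂ) :=
  Ideal.span { p | (∃ (f : Fin 3 → Fin n) (σ : Equiv.Perm (Fin 3)),
      p = MvPolynomial.X (f ∘ σ) - ((Equiv.Perm.sign σ : ℤˣ) : ℤ) • MvPolynomial.X f) ∨
    (∃ (g : Fin 2 → Fin n) (h : Fin 4 → Fin n),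
      p = ∑ l : Fin 4, (-1 : MvPolynomial (Fin 3 → Fin n) ℂ) ^ (l : ℕ) *
        MvPolynomial.X ![g 0, g 1, h l] * MvPolynomial.X (h ∘ l.succAbove)) }

/-- The homogeneous coordinate ring `ℂ[G(3,n)]` of the Grassmannian. -/
abbrev GrassRing (n : ℕ) := MvPolynomial (Fin 3 → Fin n) ℂ ⧸ plueckerIdeal n

/-- The Plücker coordinate `Δ^{ijk}`. -/
noncomputable def Pl {n : ℕ} (i j k : Fin n) : GrassRing n :=
  Ideal.Quotient.mk _ (MvPolynomial.X ![i, j, k])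

/-- Median of three elements of `Fin n`. -/
def mid3 {n : ℕ} (i j k : Fin n) : Fin n := max (min i j) (min (max i j) k)

/-- The Plücker coordinate `Δ^{o(i,j,k)}` with the indices ordered increasingly. -/
noncomputable def Plo {n : ℕ} (i j k : Fin n) : GrassRing n :=
  Pl (min i (min j k)) (mid3 i j k) (max i (max j k))

/-- `Δ_k(i) = v(Δ at {i, i+1, i+k+2})`. -/
noncomputable def Dlow {n : ℕ} [NeZero n] (v : GrassRing n →ₐ[ℂ] ℂ) (k : ℕ) (i : Fin n) : ℂ :=
  v (Plo i (i + 1) (i + (Fin.ofNat n (k + 2))))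

/-- `Δ^k(i) = v(Δ at {i, i+k+1, i+k+2})`. -/
noncomputable def Dup {n : ℕ} [NeZero n] (v : GrassRing n →ₐ[ℂ] ℂ) (k : ℕ) (i : Fin n) : ℂ :=
  v (Plo i (i + (Fin.ofNat n (k + 1))) (i + (Fin.ofNat n (k + 2))))

/-! Put `x j = i + j`. As `k + 2 < n`, the points `x 0, …, x (k + 2)` are in cyclic order, so every
`Δ^{o(…)}` in the statement is the Plücker coordinate `Δ` with its indices listed in that order.
With `K = k + 2`, the three-term relations centred at `x 1` and at `x 3`,
  `Δ^{01K} Δ^{123} = Δ^{013} Δ^{12K} - Δ^{012} Δ^{13K}` and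
  `Δ^{13K} Δ^{234} = Δ^{134} Δ^{23K} - Δ^{123} Δ^{34K}`,
eliminate `Δ^{13K}`, and the normalisation `v Δ^{j,j+1,j+2} = 1` turns the result into the
recursion. -/

section Pluecker

variable {n : ℕ}

open MvPolynomial

lemma mk_X_comp_swap (f : Fin 3 → Fin n) {p q : Fin 3} (hpq : p ≠ q) :
    Ideal.Quotient.mk (plueckerIdeal n) (X (f ∘ Equiv.swap p q)) =
      -Ideal.Quotient.mk (plueckerIdeal n) (X f) := by
  have h : X (f ∘ Equiv.swap p q) - ((Equiv.Perm.sign (Equiv.swap p q) : ℤˣ) : ℤ) • X f ∈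
      plueckerIdeal n :=
    Ideal.subset_span (Or.inl ⟨f, _, rfl⟩)
  rw [Equiv.Perm.sign_swap hpq, Units.val_neg, Units.val_one, neg_smul, one_smul,
    sub_neg_eq_add, ← Ideal.Quotient.eq_zero_iff_mem, map_add] at h
  exact eq_neg_of_add_eq_zero_left h

lemma Pl_swap_right (a b c : Fin n) : Pl a c b = -Pl a b c := by
  have h : ![a, b, c] ∘ Equiv.swap 1 2 = ![a, c, b] := by
    funext j; fin_cases j <;> rfl
  simpa only [Pl, h] using mk_X_comp_swap ![a, b, c] (p := 1) (q := 2) (by decide)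

lemma Pl_swap_left (a b c : Fin n) : Pl b a c = -Pl a b c := by
  have h : ![a, b, c] ∘ Equiv.swap 0 1 = ![b, a, c] := by
    funext j; fin_cases j <;> rfl
  simpa only [Pl, h] using mk_X_comp_swap ![a, b, c] (p := 0) (q := 1) (by decide)

lemma Pl_rotate (a b c : Fin n) : Pl b c a = Pl a b c := by
  rw [Pl_swap_right, Pl_swap_left, neg_neg]

lemma Pl_self_right (a b : Fin n) : Pl a b b = 0 := by
  have h : (2 : ℂ) • Pl a b b = 0 := by
    rw [two_smul]
    nth_rewrite 1 [Pl_swap_right]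
    exact neg_add_cancel _
  simpa using congrArg ((2 : ℂ)⁻¹ • ·) h

lemma Pl_three_term (z a b c d : Fin n) :
    Pl z a c * Pl z b d = Pl z a b * Pl z c d + Pl z a d * Pl z b c := by
  have hrel : X ![z, a, z] * X ![b, c, d] - X ![z, a, b] * X ![z, c, d] +
      X ![z, a, c] * X ![z, b, d] - X ![z, a, d] * X ![z, b, c] ∈ plueckerIdeal n := by
    refine Ideal.subset_span (Or.inr ⟨![z, a], ![z, b, c, d], ?_⟩)
    have e0 : ![z, b, c, d] ∘ Fin.succ = ![b, c, d] := by funext j; fin_cases j <;> rfl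
    have e1 : ![z, b, c, d] ∘ Fin.succAbove 1 = ![z, c, d] := by funext j; fin_cases j <;> rfl
    have e2 : ![z, b, c, d] ∘ Fin.succAbove 2 = ![z, b, d] := by funext j; fin_cases j <;> rfl
    have e3 : ![z, b, c, d] ∘ Fin.succAbove 3 = ![z, b, c] := by funext j; fin_cases j <;> rfl
    simp [Fin.sum_univ_four, e0, e1, e2, e3, sub_eq_add_neg, pow_succ]
  have h : Pl z a z * Pl b c d - Pl z a b * Pl z c d + Pl z a c * Pl z b d
      - Pl z a d * Pl z b c = 0 := by
    have hmk := Ideal.Quotient.eq_zero_iff_mem.2 hrel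
    simp only [map_sub, map_add, map_mul] at hmk
    exact hmk
  rw [← Pl_rotate, Pl_self_right, zero_mul, zero_sub] at h
  linear_combination h

end Pluecker

section Ordering

variable {n : ℕ}

lemma Plo_eq_Pl {a b c : Fin n} (h : Cyc a b c) : Plo a b c = Pl a b c := by
  rcases h with ⟨hab, hbc⟩ | ⟨hbc, hca⟩ | ⟨hca, hab⟩
  · have hac := hab.trans hbc
    simp [Plo, mid3, hab.le, hbc.le, hac.le]
  · have hba := hbc.trans hca
    rw [← Pl_rotate]
    simp [Plo, mid3, hbc.le, hca.le, hba.le]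
  · have hcb := hca.trans hab
    rw [Pl_rotate]
    simp [Plo, mid3, hca.le, hab.le, hcb.le]

lemma Cyc.add_left {a b c : Fin n} (h : Cyc a b c) (i : Fin n) : Cyc (i + a) (i + b) (i + c) := by
  unfold Cyc at h ⊢
  simp only [Fin.lt_def, Fin.val_add_eq_ite] at h ⊢
  have := a.isLt; have := b.isLt; have := c.isLt; have := i.isLt
  split_ifs <;> omega

open Fin.NatCast in
lemma cyc_natCast [NeZero n] {s t u : ℕ} (hst : s < t) (htu : t < u) (hu : u < n) :
    Cyc (s : Fin n) t u := by
  left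
  simp only [Fin.lt_def, Fin.val_natCast, Nat.mod_eq_of_lt hu, Nat.mod_eq_of_lt (htu.trans hu),
    Nat.mod_eq_of_lt (hst.trans (htu.trans hu))]
  exact ⟨hst, htu⟩

end Ordering

lemma Pl_recursion {n : ℕ} (p₀ p₁ p₂ p₃ p₄ q : Fin n) :
    Pl p₀ p₁ q * Pl p₁ p₂ p₃ * Pl p₂ p₃ p₄ =
      Pl p₀ p₁ p₃ * Pl p₁ p₂ q * Pl p₂ p₃ p₄ - Pl p₀ p₁ p₂ * Pl p₁ p₃ p₄ * Pl p₂ p₃ q +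
        Pl p₀ p₁ p₂ * Pl p₁ p₂ p₃ * Pl p₃ p₄ q := by
  have h₁ := Pl_three_term p₁ p₂ p₃ q p₀
  have h₃ := Pl_three_term p₃ p₄ q p₁ p₂
  rw [Pl_rotate p₀ p₁ p₃, Pl_rotate p₀ p₁ q, Pl_rotate p₀ p₁ p₂] at h₁
  rw [Pl_rotate p₁ p₃ p₄, Pl_rotate p₂ p₃ q, ← Pl_rotate p₃ p₁ p₂, Pl_rotate p₂ p₃ p₄,
    Pl_rotate p₁ p₃ q] at h₃
  linear_combination (-Pl p₂ p₃ p₄) * h₁ + Pl p₀ p₁ p₂ * h₃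

section Evaluation

variable {n : ℕ} [NeZero n] (v : GrassRing n →ₐ[ℂ] ℂ) (i : Fin n)

open Fin.NatCast

lemma Plo_natCast_add {s t u : ℕ} (hst : s < t) (htu : t < u) (hu : u < n) :
    Plo (i + (s : Fin n)) (i + (t : Fin n)) (i + (u : Fin n)) =
      Pl (i + (s : Fin n)) (i + (t : Fin n)) (i + (u : Fin n)) :=
  Plo_eq_Pl ((cyc_natCast hst htu hu).add_left i)

lemma Dlow_natCast_add {j k : ℕ} (h : k + j + 2 < n) :
    Dlow v k (i + (j : Fin n)) =
      v (Pl (i + (j : Fin n)) (i + ((j + 1 : ℕ) : Fin n)) (i + ((k + j + 2 : ℕ) : Fin n))) := by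
  rw [Dlow, Fin.ofNat_eq_cast, ← Plo_natCast_add i (by omega) (by omega) h]
  congr 2 <;> push_cast <;> abel

lemma Dup_natCast_add {j k : ℕ} (h : k + j + 2 < n) :
    Dup v k (i + (j : Fin n)) =
      v (Pl (i + (j : Fin n)) (i + ((k + j + 1 : ℕ) : Fin n)) (i + ((k + j + 2 : ℕ) : Fin n))) := by
  rw [Dup, Fin.ofNat_eq_cast, Fin.ofNat_eq_cast, ← Plo_natCast_add i (by omega) (by omega) h]
  congr 2 <;> push_cast <;> abel

lemma eval_Pl_natCast_add_consecutive (h1 : ∀ i : Fin n, v (Plo i (i + 1) (i + 2)) = 1)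
    {j : ℕ} (h : j + 2 < n) :
    v (Pl (i + (j : Fin n)) (i + ((j + 1 : ℕ) : Fin n)) (i + ((j + 2 : ℕ) : Fin n))) = 1 := by
  rw [← Plo_natCast_add i (by omega) (by omega) h, ← h1 (i + j)]
  congr 2 <;> push_cast <;> abel

end Evaluation

/-- Recursion for the `Δ_k(i)`. -/
theorem low_recursion {n : ℕ} [NeZero n] (v : GrassRing n →ₐ[ℂ] ℂ)
    (h1 : ∀ i : Fin n, v (Plo i (i + 1) (i + 2)) = 1)
    (k : ℕ) (hk : 3 ≤ k) (hk' : k < n - 3) (i : Fin n) :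
    Dlow v k i = Dlow v 1 i * Dlow v (k - 1) (i + 1)
      - Dup v 1 (i + 1) * Dlow v (k - 2) (i + 2)
      + Dlow v (k - 3) (i + 3) := by
  open Fin.NatCast in
  obtain ⟨m, rfl⟩ : ∃ m, k = m + 3 := ⟨k - 3, by omega⟩
  set x : ℕ → Fin n := fun j => i + (j : Fin n)
  have hlow (j k : ℕ) (h : k + j + 2 < n) :
      Dlow v k (x j) = v (Pl (x j) (x (j + 1)) (x (k + j + 2))) :=
    Dlow_natCast_add v i h
  have hup (j k : ℕ) (h : k + j + 2 < n) :
      Dup v k (x j) = v (Pl (x j) (x (k + j + 1)) (x (k + j + 2))) :=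
    Dup_natCast_add v i h
  have hone (j : ℕ) (h : j + 2 < n) : v (Pl (x j) (x (j + 1)) (x (j + 2))) = 1 :=
    eval_Pl_natCast_add_consecutive v i h1 h
  rw [show i + 1 = x 1 by simp [x], show i + 2 = x 2 by simp [x], show i + 3 = x 3 by simp [x],
    show i = x 0 by simp [x], show m + 3 - 1 = m + 2 by omega, show m + 3 - 2 = m + 1 by omega,
    Nat.add_sub_cancel, hlow 0 (m + 3) (by omega), hlow 0 1 (by omega), hlow 1 (m + 2) (by omega),
    hup 1 1 (by omega), hlow 2 (m + 1) (by omega), hlow 3 m (by omega)]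
  have key := congrArg v (Pl_recursion (x 0) (x 1) (x 2) (x 3) (x 4) (x (m + 5)))
  simp only [map_mul, map_sub, map_add, hone 0 (by omega), hone 1 (by omega), hone 2 (by omega),
    mul_one, one_mul] at key
  exact key
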